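/- For every integer d ≥ 2, every even integer k ≥ 4, and all constants c_1, c_2, c_3 > 0, there exists a constant C > 0 such that for every power q of an odd prime, every (c_1,c_2,c_3)-regular set V ⊆ F_q^d, and every E ⊆ V, one has Λ_k(E) ≤ C ( q^{(d−1)(k−2)/2} Λ_2(E) + q^{−1} Σ_{j=0}^{(k−4)/2} q^{(d−1)j} |E|^{k−1−2j} ). -/

import Mathlib

/-!
Put `S(ξ) = Σ_{x ∈ E} χ(ξ·x)`. Orthogonality of characters gives `Σ_ξ |S(ξ)|^{2n} = q^d Λ_{2n}(E)`.
Since `E ⊆ V`, a solution of `x¹ + ⋯ + x^{n+1} = y¹ + ⋯ + y^{n+1}` in `E` is determined by its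
first `2n + 1` entries, which satisfy `x¹ + ⋯ + x^{n+1} - y¹ - ⋯ - yⁿ ∈ V`; by Fourier inversion
these tuples number `Σ_ξ V̂(ξ) S(ξ)^{n+1} conj(S(ξ))ⁿ`. The term `ξ = 0` is at most
`c₂ |E|^{2n+1} / q`, and by the decay of `V̂` and Cauchy–Schwarz the others are at most
`c₃ q^{(d-1)/2} (Λ_{2n} Λ_{2n+2})^{1/2}`. Absorbing the `Λ_{2n+2}` on the right gives
`Λ_{2n+2} ≤ 2 c₂ |E|^{2n+1} / q + c₃² q^{d-1} Λ_{2n}`, and iterating this down to `Λ₂` proves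
the theorem.
-/

open Finset

/-- `‖x‖ = x₁² + ⋯ + x_d²` for `x ∈ 𝔽_q^d`. -/
def normF {F : Type*} [Field F] {d : ℕ} (x : Fin d → F) : F := ∑ i, x i ^ 2

/-- The `k`-resultant set `Δ_k(E) = {‖x¹ - x² - ⋯ - x^k‖ : xⁱ ∈ E}` (for `k ≥ 2`):
`y` plays the role of `x¹` and `x 0, …, x (k-2)` play the roles of `x², …, x^k`. -/
def Delta {F : Type*} [Field F] {d : ℕ} (k : ℕ) (E : Set (Fin d → F)) : Set F :=
  {t | ∃ (y : Fin d → F) (x : Fin (k - 1) → Fin d → F),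
    y ∈ E ∧ (∀ i, x i ∈ E) ∧ normF (y - ∑ i, x i) = t}

/-- The `2m`-energy `Λ_{2m}(E)`: the number of `2m`-tuples of points of `E`
whose first `m` entries and last `m` entries have equal sums. -/
noncomputable def energy {F : Type*} [Field F] {d : ℕ} (m : ℕ) (E : Set (Fin d → F)) : ℕ :=
  Nat.card {p : (Fin m → Fin d → F) × (Fin m → Fin d → F) //
    (∀ i, p.1 i ∈ E) ∧ (∀ i, p.2 i ∈ E) ∧ (∑ i, p.1 i) = ∑ i, p.2 i}

/-- The (normalized) Fourier transform of the indicator function of `E ⊆ 𝔽_q^d`,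
with respect to the additive character `χ`. -/
noncomputable def ftF {F : Type*} [Field F] [Fintype F] {d : ℕ} (χ : AddChar F ℂ)
    (E : Set (Fin d → F)) (m : Fin d → F) : ℂ :=
  ((Fintype.card F : ℂ) ^ d)⁻¹ *
    ∑ x : Fin d → F, Set.indicator E (fun y => χ (-(∑ i, m i * y i))) x

/-- `V ⊆ 𝔽_q^d` is `(c₁,c₂,c₃)`-regular (with respect to the character `χ`). -/
def IsRegularVariety {F : Type*} [Field F] [Fintype F] {d : ℕ} (c1 c2 c3 : ℝ) (χ : AddChar F ℂ)
    (V : Set (Fin d → F)) : Prop :=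
  c1 * (Fintype.card F : ℝ) ^ (d - 1) ≤ (Nat.card V : ℝ) ∧
  (Nat.card V : ℝ) ≤ c2 * (Fintype.card F : ℝ) ^ (d - 1) ∧
  ∀ m : Fin d → F, m ≠ 0 →
    ‖ftF χ V m‖ ≤ c3 * (Fintype.card F : ℝ) ^ (-(((d : ℝ) + 1) / 2))

/-- `V ⊆ 𝔽_q²` is a `(c₁,c₂,c₃)`-nondegenerate regular curve defined by a nonzero
polynomial of total degree at most `n` (with respect to the character `χ`). -/
def IsNondegCurve {F : Type*} [Field F] [Fintype F] (c1 c2 c3 : ℝ) (χ : AddChar F ℂ)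
    (n : ℕ) (V : Set (Fin 2 → F)) : Prop :=
  (∃ Q : MvPolynomial (Fin 2) F, Q ≠ 0 ∧ Q.totalDegree ≤ n ∧
      (¬∃ A B : MvPolynomial (Fin 2) F, A.totalDegree = 1 ∧ Q = A * B) ∧
      V = {x | MvPolynomial.eval x Q = 0}) ∧
  c1 * (Fintype.card F : ℝ) ≤ (Nat.card V : ℝ) ∧
  (Nat.card V : ℝ) ≤ c2 * (Fintype.card F : ℝ) ∧
  ∀ m : Fin 2 → F, m ≠ 0 →
    ‖ftF χ V m‖ ≤ c3 * (Fintype.card F : ℝ) ^ (-(3 / 2) : ℝ)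


open ComplexConjugate

lemma AddChar.map_sum_eq_prod {A M ι : Type*} [AddCommMonoid A] [CommMonoid M] (ψ : AddChar A M)
    (s : Finset ι) (f : ι → A) : ψ (∑ i ∈ s, f i) = ∏ i ∈ s, ψ (f i) :=
  map_prod ψ.toMonoidHom (fun i => Multiplicative.ofAdd (f i)) s

lemma AddChar.IsPrimitive.sum_apply_dotProduct {R R' : Type*} [CommRing R] [Fintype R]
    [DecidableEq R] [CommRing R'] [IsDomain R'] {ψ : AddChar R R'} (hψ : ψ.IsPrimitive) {d : ℕ}
    (u : Fin d → R) :
    ∑ ξ : Fin d → R, ψ (ξ ⬝ᵥ u) = if u = 0 then (Fintype.card R : R') ^ d else 0 := by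
  have hprod : ∑ ξ : Fin d → R, ψ (ξ ⬝ᵥ u) = ∏ i, ∑ t : R, ψ (t * u i) := by
    simp only [Fintype.prod_sum, dotProduct, ψ.map_sum_eq_prod]
  rw [hprod]
  split_ifs with hu
  · simp [hu]
  · obtain ⟨i, hi⟩ : ∃ i, u i ≠ 0 := Function.ne_iff.1 hu
    exact prod_eq_zero (mem_univ i) (by rw [AddChar.sum_mulShift _ hψ, if_neg hi, Nat.cast_zero])

lemma le_two_mul_add_of_le_add_of_sq_le {x a y K : ℝ} (ha : 0 ≤ a) (hK : 0 ≤ K) (hy : 0 ≤ y)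
    (h : x ≤ a + y) (hy2 : y ^ 2 ≤ K * x) : x ≤ 2 * a + K := by
  nlinarith [sq_nonneg (x - K)]

lemma sq_rpow_neg_succ_half_mul_pow {q : ℝ} (hq : 0 < q) {d : ℕ} (hd : 1 ≤ d) :
    (q ^ (-(((d : ℝ) + 1) / 2)) * q ^ d) ^ 2 = q ^ (d - 1) := by
  rw [← Real.rpow_natCast q d, ← Real.rpow_add hq, ← Real.rpow_mul_natCast hq.le,
    ← Real.rpow_natCast q (d - 1), Nat.cast_sub hd]
  congr 1
  push_cast
  ring

lemma le_pow_mul_add_sum_of_le_add_mul {y b : ℕ → ℝ} {r : ℝ} (hr : 0 ≤ r)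
    (h : ∀ n, y (n + 1) ≤ b n + r * y n) (t : ℕ) :
    y t ≤ r ^ t * y 0 + ∑ j ∈ range t, r ^ j * b (t - 1 - j) := by
  induction t with
  | zero => simp
  | succ t ih =>
    calc y (t + 1) ≤ b t + r * (r ^ t * y 0 + ∑ j ∈ range t, r ^ j * b (t - 1 - j)) :=
          (h t).trans (by gcongr)
      _ = r ^ (t + 1) * y 0 + ∑ j ∈ range (t + 1), r ^ j * b (t + 1 - 1 - j) := by
          have hshift : ∑ j ∈ range t, r ^ (j + 1) * b (t + 1 - 1 - (j + 1)) =
              r * ∑ j ∈ range t, r ^ j * b (t - 1 - j) := by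
            rw [mul_sum]
            exact sum_congr rfl fun j _ => by
              rw [show t + 1 - 1 - (j + 1) = t - 1 - j by omega, pow_succ]; ring
          rw [sum_range_succ', hshift]
          simp only [pow_zero, one_mul, Nat.add_sub_cancel, Nat.sub_zero]
          ring

section EnergyEstimates

variable {F : Type*} [Field F] {d : ℕ} {χ : AddChar F ℂ}

/-- Equals `q ^ d * ftF χ s (-ξ)`: the unnormalized transform, up to the sign of `ξ`. -/
def expSum (χ : AddChar F ℂ) (s : Finset (Fin d → F)) (ξ : Fin d → F) : ℂ :=
  ∑ x ∈ s, χ (ξ ⬝ᵥ x)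

lemma expSum_zero (s : Finset (Fin d → F)) : expSum χ s 0 = #s := by
  simp [expSum]

lemma expSum_pow (s : Finset (Fin d → F)) (ξ : Fin d → F) (n : ℕ) :
    expSum χ s ξ ^ n = ∑ a ∈ Fintype.piFinset fun _ : Fin n => s, χ (ξ ⬝ᵥ ∑ i, a i) := by
  rw [← Fin.prod_const, expSum, prod_univ_sum]
  simp only [dotProduct_sum, χ.map_sum_eq_prod]

variable [Fintype F]

lemma expSum_neg (s : Finset (Fin d → F)) (ξ : Fin d → F) :
    expSum χ s (-ξ) = conj (expSum χ s ξ) := by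
  simp [expSum, neg_dotProduct, AddChar.map_neg_eq_conj]

lemma ftF_eq_sum (V : Set (Fin d → F)) [DecidablePred (· ∈ V)] (ξ : Fin d → F) :
    ftF χ V ξ = ((Fintype.card F : ℂ) ^ d)⁻¹ * ∑ x with x ∈ V, χ (-(ξ ⬝ᵥ x)) := by
  simp only [ftF, sum_filter, Set.indicator_apply]
  rfl

lemma ftF_singleton_zero (ξ : Fin d → F) :
    ftF χ {0} ξ = ((Fintype.card F : ℂ) ^ d)⁻¹ := by
  classical
  simp [ftF_eq_sum, filter_eq']

lemma norm_ftF_zero (V : Set (Fin d → F)) :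
    ‖ftF χ V 0‖ = Nat.card V / (Fintype.card F : ℝ) ^ d := by
  classical
  simp [ftF_eq_sum, Nat.card_eq_fintype_card, Fintype.card_subtype, div_eq_inv_mul]

lemma norm_ftF_zero_le {c₂ : ℝ} (hd : 1 ≤ d) {V : Set (Fin d → F)}
    (hV : (Nat.card V : ℝ) ≤ c₂ * (Fintype.card F : ℝ) ^ (d - 1)) :
    ‖ftF χ V 0‖ ≤ c₂ / Fintype.card F := by
  have hq : (0 : ℝ) < Fintype.card F := by exact_mod_cast Fintype.card_pos
  rw [norm_ftF_zero, div_le_div_iff₀ (by positivity) hq]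
  calc (Nat.card V : ℝ) * Fintype.card F ≤ c₂ * (Fintype.card F : ℝ) ^ (d - 1) * Fintype.card F :=
        mul_le_mul_of_nonneg_right hV hq.le
    _ = c₂ * (Fintype.card F : ℝ) ^ d := by rw [mul_assoc, ← pow_succ, Nat.sub_add_cancel hd]

lemma sum_ftF_mul_apply_dotProduct (hχ : χ.IsPrimitive) (V : Set (Fin d → F))
    [DecidablePred (· ∈ V)] (y : Fin d → F) :
    ∑ ξ, ftF χ V ξ * χ (ξ ⬝ᵥ y) = if y ∈ V then 1 else 0 := by
  classical
  have hq : (Fintype.card F : ℂ) ^ d ≠ 0 := by simp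
  simp_rw [ftF_eq_sum, mul_assoc, ← mul_sum, sum_mul, ← AddChar.map_add_eq_mul,
    ← dotProduct_neg, ← dotProduct_add]
  rw [sum_comm]
  simp_rw [hχ.sum_apply_dotProduct, neg_add_eq_zero, sum_ite_eq', mem_filter, mem_univ, true_and]
  split_ifs <;> simp [hq]

theorem sum_ftF_mul_expSum_pow (hχ : χ.IsPrimitive) (V : Set (Fin d → F))
    [DecidablePred (· ∈ V)] (s : Finset (Fin d → F)) (m₁ m₂ : ℕ) :
    ∑ ξ, ftF χ V ξ * expSum χ s ξ ^ m₁ * expSum χ s (-ξ) ^ m₂ =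
      #{p ∈ (Fintype.piFinset fun _ : Fin m₁ => s) ×ˢ (Fintype.piFinset fun _ : Fin m₂ => s) |
        ∑ i, p.1 i - ∑ i, p.2 i ∈ V} := by
  have hprod : ∀ ξ, expSum χ s ξ ^ m₁ * expSum χ s (-ξ) ^ m₂ =
      ∑ p ∈ (Fintype.piFinset fun _ : Fin m₁ => s) ×ˢ (Fintype.piFinset fun _ : Fin m₂ => s),
        χ (ξ ⬝ᵥ (∑ i, p.1 i - ∑ i, p.2 i)) := fun ξ => by
    simp_rw [expSum_pow, sum_mul_sum, ← sum_product', neg_dotProduct, ← AddChar.map_add_eq_mul,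
      dotProduct_sub, sub_eq_add_neg]
  simp_rw [mul_assoc, hprod, mul_sum]
  rw [sum_comm]
  simp_rw [sum_ftF_mul_apply_dotProduct hχ]
  rw [sum_boole]

lemma energy_coe_eq_card [DecidableEq F] (s : Finset (Fin d → F)) (n : ℕ) :
    energy n (s : Set (Fin d → F)) =
      #{p ∈ (Fintype.piFinset fun _ : Fin n => s) ×ˢ (Fintype.piFinset fun _ : Fin n => s) |
        ∑ i, p.1 i = ∑ i, p.2 i} := by
  rw [energy, Nat.card_eq_fintype_card]
  exact Fintype.card_of_subtype _ fun p => by simp [and_assoc]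

lemma sum_norm_expSum_pow (hχ : χ.IsPrimitive) (s : Finset (Fin d → F)) (n : ℕ) :
    ∑ ξ, ‖expSum χ s ξ‖ ^ (2 * n) =
      (Fintype.card F : ℝ) ^ d * energy n (s : Set (Fin d → F)) := by
  classical
  have hq : (Fintype.card F : ℂ) ^ d ≠ 0 := by simp
  have hnorm : ∀ ξ, expSum χ s ξ ^ n * expSum χ s (-ξ) ^ n =
      ((‖expSum χ s ξ‖ ^ (2 * n) : ℝ) : ℂ) := fun ξ => by
    rw [expSum_neg, ← mul_pow, Complex.mul_conj, Complex.normSq_eq_norm_sq, pow_mul]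
    norm_cast
  have key := sum_ftF_mul_expSum_pow hχ {0} s n n
  simp only [ftF_singleton_zero, mul_assoc, ← mul_sum, Set.mem_singleton_iff, sub_eq_zero,
    ← energy_coe_eq_card, hnorm, inv_mul_eq_iff_eq_mul₀ hq] at key
  exact_mod_cast key

lemma sum_norm_expSum_pow_sq_le (hχ : χ.IsPrimitive) (s : Finset (Fin d → F)) (n : ℕ) :
    (∑ ξ, ‖expSum χ s ξ‖ ^ (2 * n + 1)) ^ 2 ≤
      ((Fintype.card F : ℝ) ^ d) ^ 2 * energy n (s : Set (Fin d → F)) *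
        energy (n + 1) (s : Set (Fin d → F)) := by
  have hcs := sum_mul_sq_le_sq_mul_sq univ (fun ξ => ‖expSum χ s ξ‖ ^ n)
    (fun ξ => ‖expSum χ s ξ‖ ^ (n + 1))
  simp only [← pow_add, ← pow_mul] at hcs
  rw [show n + (n + 1) = 2 * n + 1 by ring, mul_comm n, mul_comm (n + 1),
    sum_norm_expSum_pow hχ, sum_norm_expSum_pow hχ] at hcs
  linarith

lemma energy_succ_le_card [DecidableEq F] {V : Set (Fin d → F)} [DecidablePred (· ∈ V)]
    {s : Finset (Fin d → F)} (hsV : (s : Set (Fin d → F)) ⊆ V) (n : ℕ) :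
    energy (n + 1) (s : Set (Fin d → F)) ≤
      #{p ∈ (Fintype.piFinset fun _ : Fin (n + 1) => s) ×ˢ (Fintype.piFinset fun _ : Fin n => s) |
        ∑ i, p.1 i - ∑ i, p.2 i ∈ V} := by
  rw [energy_coe_eq_card]
  have hlast : ∀ {a b : Fin (n + 1) → Fin d → F}, ∑ i, a i = ∑ i, b i →
      b (Fin.last n) = ∑ i, a i - ∑ i, Fin.init b i := fun h => by
    rw [h, Fin.sum_univ_castSucc]; simp [Fin.init]
  refine card_le_card_of_injOn (fun p => (p.1, Fin.init p.2)) ?_ ?_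
  · intro p hp
    simp only [coe_filter, mem_product, Fintype.mem_piFinset] at hp ⊢
    exact ⟨⟨hp.1.1, fun i => hp.1.2 _⟩, hlast hp.2 ▸ hsV (hp.1.2 _)⟩
  · intro p hp p' hp' h
    simp only [coe_filter, mem_product, Prod.mk.injEq] at hp hp' h
    refine Prod.ext h.1 ?_
    rw [← Fin.snoc_init_self p.2, ← Fin.snoc_init_self p'.2, hlast hp.2, hlast hp'.2, h.1, h.2]

lemma energy_succ_le_sum_norm_ftF (hχ : χ.IsPrimitive) {V : Set (Fin d → F)}
    {s : Finset (Fin d → F)} (hsV : (s : Set (Fin d → F)) ⊆ V) (n : ℕ) :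
    (energy (n + 1) (s : Set (Fin d → F)) : ℝ) ≤
      ∑ ξ, ‖ftF χ V ξ‖ * ‖expSum χ s ξ‖ ^ (2 * n + 1) := by
  classical
  calc (energy (n + 1) (s : Set (Fin d → F)) : ℝ)
      ≤ ‖((#{p ∈ (Fintype.piFinset fun _ : Fin (n + 1) => s) ×ˢ
          (Fintype.piFinset fun _ : Fin n => s) | ∑ i, p.1 i - ∑ i, p.2 i ∈ V} : ℕ) : ℂ)‖ := by
        rw [Complex.norm_natCast]; exact_mod_cast energy_succ_le_card hsV n
    _ = ‖∑ ξ, ftF χ V ξ * expSum χ s ξ ^ (n + 1) * expSum χ s (-ξ) ^ n‖ := by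
        rw [sum_ftF_mul_expSum_pow hχ]
    _ ≤ ∑ ξ, ‖ftF χ V ξ * expSum χ s ξ ^ (n + 1) * expSum χ s (-ξ) ^ n‖ := norm_sum_le _ _
    _ = ∑ ξ, ‖ftF χ V ξ‖ * ‖expSum χ s ξ‖ ^ (2 * n + 1) := by
        simp_rw [norm_mul, norm_pow, expSum_neg, Complex.norm_conj, mul_assoc, ← pow_add,
          show n + 1 + n = 2 * n + 1 by ring]

lemma sum_norm_ftF_mul_le {c₂ c₃ : ℝ} (hc₃ : 0 ≤ c₃) (hd : 1 ≤ d) {V : Set (Fin d → F)}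
    (hV : (Nat.card V : ℝ) ≤ c₂ * (Fintype.card F : ℝ) ^ (d - 1))
    (hV' : ∀ ξ : Fin d → F, ξ ≠ 0 →
      ‖ftF χ V ξ‖ ≤ c₃ * (Fintype.card F : ℝ) ^ (-(((d : ℝ) + 1) / 2)))
    (s : Finset (Fin d → F)) (m : ℕ) :
    ∑ ξ, ‖ftF χ V ξ‖ * ‖expSum χ s ξ‖ ^ m ≤
      c₂ / Fintype.card F * (#s : ℝ) ^ m +
        c₃ * (Fintype.card F : ℝ) ^ (-(((d : ℝ) + 1) / 2)) * ∑ ξ, ‖expSum χ s ξ‖ ^ m := by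
  classical
  rw [← add_sum_erase _ _ (mem_univ 0), expSum_zero, Complex.norm_natCast]
  gcongr
  · exact norm_ftF_zero_le hd hV
  · calc ∑ ξ ∈ univ.erase 0, ‖ftF χ V ξ‖ * ‖expSum χ s ξ‖ ^ m
        ≤ ∑ ξ ∈ univ.erase 0, c₃ * (Fintype.card F : ℝ) ^ (-(((d : ℝ) + 1) / 2)) *
            ‖expSum χ s ξ‖ ^ m := by
          gcongr with ξ hξ
          exact hV' ξ (ne_of_mem_erase hξ)
      _ ≤ _ := by
          rw [← mul_sum]
          gcongr
          exact erase_subset _ _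

theorem energy_succ_le {c₂ c₃ : ℝ} (hc₃ : 0 ≤ c₃) (hd : 1 ≤ d) (hχ : χ.IsPrimitive)
    {V : Set (Fin d → F)} (hV : (Nat.card V : ℝ) ≤ c₂ * (Fintype.card F : ℝ) ^ (d - 1))
    (hV' : ∀ ξ : Fin d → F, ξ ≠ 0 →
      ‖ftF χ V ξ‖ ≤ c₃ * (Fintype.card F : ℝ) ^ (-(((d : ℝ) + 1) / 2)))
    {s : Finset (Fin d → F)} (hsV : (s : Set (Fin d → F)) ⊆ V) (n : ℕ) :
    (energy (n + 1) (s : Set (Fin d → F)) : ℝ) ≤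
      2 * c₂ * (#s : ℝ) ^ (2 * n + 1) / Fintype.card F +
        c₃ ^ 2 * (Fintype.card F : ℝ) ^ (d - 1) * energy n (s : Set (Fin d → F)) := by
  have hq : (0 : ℝ) < Fintype.card F := by exact_mod_cast Fintype.card_pos
  have hc₂ : 0 ≤ c₂ := nonneg_of_mul_nonneg_left ((Nat.cast_nonneg _).trans hV) (by positivity)
  set β := c₃ * (Fintype.card F : ℝ) ^ (-(((d : ℝ) + 1) / 2)) with hβ_def
  have hβ_sq : β ^ 2 * ((Fintype.card F : ℝ) ^ d) ^ 2 =
      c₃ ^ 2 * (Fintype.card F : ℝ) ^ (d - 1) := by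
    rw [hβ_def, ← sq_rpow_neg_succ_half_mul_pow hq hd]; ring
  have hsplit := (energy_succ_le_sum_norm_ftF hχ hsV n).trans
    (sum_norm_ftF_mul_le hc₃ hd hV hV' s (2 * n + 1))
  have hcs := mul_le_mul_of_nonneg_left (sum_norm_expSum_pow_sq_le hχ s n) (sq_nonneg β)
  have hmain := le_two_mul_add_of_le_add_of_sq_le
    (K := β ^ 2 * ((Fintype.card F : ℝ) ^ d) ^ 2 * energy n (s : Set (Fin d → F)))
    (by positivity) (by positivity) (by positivity) hsplit (by rw [mul_pow]; linarith)
  rw [← hβ_sq]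
  exact hmain.trans_eq (by ring)

theorem energy_succ_le_const_mul {c₂ c₃ : ℝ} (hc₂ : 0 ≤ c₂) (hc₃ : 0 ≤ c₃) (hd : 1 ≤ d)
    (hχ : χ.IsPrimitive) {V : Set (Fin d → F)}
    (hV : (Nat.card V : ℝ) ≤ c₂ * (Fintype.card F : ℝ) ^ (d - 1))
    (hV' : ∀ ξ : Fin d → F, ξ ≠ 0 →
      ‖ftF χ V ξ‖ ≤ c₃ * (Fintype.card F : ℝ) ^ (-(((d : ℝ) + 1) / 2)))
    {s : Finset (Fin d → F)} (hsV : (s : Set (Fin d → F)) ⊆ V) (t : ℕ) :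
    (energy (t + 1) (s : Set (Fin d → F)) : ℝ) ≤ (1 + 2 * c₂ + c₃ ^ 2) ^ (t + 1) *
      ((Fintype.card F : ℝ) ^ ((d - 1) * t) * energy 1 (s : Set (Fin d → F)) +
        (∑ j ∈ range t, (Fintype.card F : ℝ) ^ ((d - 1) * j) * (#s : ℝ) ^ (2 * t + 1 - 2 * j)) /
          Fintype.card F) := by
  set q : ℝ := (Fintype.card F : ℝ)
  set B := 1 + 2 * c₂ + c₃ ^ 2
  have hB : 1 ≤ B := by linarith [sq_nonneg c₃]
  have hc₂B : 2 * c₂ ≤ B := by linarith [sq_nonneg c₃]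
  have hc₃B : c₃ ^ 2 ≤ B := by linarith
  have hunroll := le_pow_mul_add_sum_of_le_add_mul
    (y := fun n => (energy (n + 1) (s : Set (Fin d → F)) : ℝ))
    (b := fun n => 2 * c₂ * (#s : ℝ) ^ (2 * (n + 1) + 1) / q) (r := c₃ ^ 2 * q ^ (d - 1))
    (by positivity) (fun n => energy_succ_le hc₃ hd hχ hV hV' hsV (n + 1)) t
  refine hunroll.trans ?_
  rw [mul_add, sum_div, mul_sum]
  gcongr ?_ + ∑ j ∈ range t, ?_ with j hj
  · rw [mul_pow, ← pow_mul q, Nat.zero_add, mul_assoc]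
    gcongr
    calc (c₃ ^ 2) ^ t ≤ B ^ t := by gcongr
      _ ≤ B ^ (t + 1) := pow_le_pow_right₀ hB t.le_succ
  · have hjt := mem_range.1 hj
    rw [show 2 * (t - 1 - j + 1) + 1 = 2 * t + 1 - 2 * j by omega, mul_pow, ← pow_mul q]
    calc (c₃ ^ 2) ^ j * q ^ ((d - 1) * j) * (2 * c₂ * (#s : ℝ) ^ (2 * t + 1 - 2 * j) / q)
        = 2 * c₂ * (c₃ ^ 2) ^ j * (q ^ ((d - 1) * j) * (#s : ℝ) ^ (2 * t + 1 - 2 * j) / q) := by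
          ring
      _ ≤ B ^ (t + 1) * (q ^ ((d - 1) * j) * (#s : ℝ) ^ (2 * t + 1 - 2 * j) / q) := by
          gcongr
          calc 2 * c₂ * (c₃ ^ 2) ^ j ≤ B * B ^ j := by gcongr
            _ = B ^ (j + 1) := (pow_succ' B j).symm
            _ ≤ B ^ (t + 1) := pow_le_pow_right₀ hB (by omega)

end EnergyEstimates

theorem stmt_11_general (d k : ℕ) (hd : 2 ≤ d) (hk : 4 ≤ k) (hke : Even k)
    (c1 c2 c3 : ℝ) (hc2 : 0 < c2) (hc3 : 0 < c3) :
    ∃ C : ℝ, 0 < C ∧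
      ∀ (F : Type) [Field F] [Fintype F], Odd (Fintype.card F) →
        ∀ χ : AddChar F ℂ, χ ≠ 1 →
          ∀ V : Set (Fin d → F), IsRegularVariety c1 c2 c3 χ V →
            ∀ E : Set (Fin d → F), E ⊆ V →
              (energy (k / 2) E : ℝ) ≤
                C * ((Fintype.card F : ℝ) ^ ((d - 1) * (k - 2) / 2) * (energy 1 E : ℝ) +
                  (∑ j ∈ Finset.range ((k - 4) / 2 + 1),
                    (Fintype.card F : ℝ) ^ ((d - 1) * j) *
                      (Nat.card E : ℝ) ^ (k - 1 - 2 * j)) / (Fintype.card F : ℝ)) := by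
  obtain ⟨t, rfl⟩ : ∃ t, k = 2 * t + 2 := by obtain ⟨r, hr⟩ := hke; exact ⟨r - 1, by omega⟩
  refine ⟨(1 + 2 * c2 + c3 ^ 2) ^ (t + 1), by positivity, ?_⟩
  intro F _ _ _ χ hχ V hV E hEV
  obtain ⟨s, rfl⟩ := E.toFinite.exists_finset_coe
  rw [show (2 * t + 2) / 2 = t + 1 by omega, show (2 * t + 2 - 4) / 2 + 1 = t by omega,
    show 2 * t + 2 - 1 = 2 * t + 1 by omega,
    show (d - 1) * (2 * t + 2 - 2) / 2 = (d - 1) * t by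
      rw [show 2 * t + 2 - 2 = 2 * t by omega, mul_left_comm, Nat.mul_div_cancel_left _ two_pos],
    Nat.card_coe_set_eq, Set.ncard_coe_finset]
  exact energy_succ_le_const_mul hc2.le hc3.le (by omega) (AddChar.IsPrimitive.of_ne_one hχ)
    hV.2.1 hV.2.2 hEV t

/-- for `d ≥ 2`, even `k ≥ 4` and `c₁, c₂, c₃ > 0` there is `C > 0` such that
for every odd prime power `q`, every `(c₁,c₂,c₃)`-regular `V ⊆ 𝔽_q^d` and every `E ⊆ V`,
`Λ_k(E) ≤ C (q^{(d-1)(k-2)/2} Λ_2(E) + q^{-1} Σ_{j=0}^{(k-4)/2} q^{(d-1)j} |E|^{k-1-2j})`. -/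
theorem stmt_11 (d k : ℕ) (hd : 2 ≤ d) (hk : 4 ≤ k) (hke : Even k)
    (c1 c2 c3 : ℝ) (hc1 : 0 < c1) (hc2 : 0 < c2) (hc3 : 0 < c3) :
    ∃ C : ℝ, 0 < C ∧
      ∀ (F : Type) [Field F] [Fintype F], Odd (Fintype.card F) →
        ∀ χ : AddChar F ℂ, χ ≠ 1 →
          ∀ V : Set (Fin d → F), IsRegularVariety c1 c2 c3 χ V →
            ∀ E : Set (Fin d → F), E ⊆ V →
              (energy (k / 2) E : ℝ) ≤
                C * ((Fintype.card F : ℝ) ^ ((d - 1) * (k - 2) / 2) * (energy 1 E : ℝ) +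
                  (∑ j ∈ Finset.range ((k - 4) / 2 + 1),
                    (Fintype.card F : ℝ) ^ ((d - 1) * j) *
                      (Nat.card E : ℝ) ^ (k - 1 - 2 * j)) / (Fintype.card F : ℝ)) :=
  stmt_11_general d k hd hk hke c1 c2 c3 hc2 hc3
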